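/- arXiv:1803.08224 — 2 statements merged into one kernel-verified Lean document; each statement's English description precedes it below -/
import Mathlib

section
/- Let K ⊆ ℝ^n be a convex body with barycenter at the origin and volume 1. Then M_{1/2}(K) is centrally symmetric, i.e., M_{1/2}(K) = -M_{1/2}(K). -/
open MeasureTheory Metric Set
open scoped RealInnerProductSpace ENNReal Topology Pointwise

noncomputable def metronoid {n : ℕ} (μ : Measure (EuclideanSpace ℝ (Fin n))) :
    Set (EuclideanSpace ℝ (Fin n)) :=
  {z | ∃ f : EuclideanSpace ℝ (Fin n) → ℝ,
    (∀ y, 0 ≤ f y ∧ f y ≤ 1) ∧ Integrable f μ ∧ (∫ y, f y ∂μ) = 1 ∧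
    Integrable (fun y => f y • y) μ ∧ z = ∫ y, f y • y ∂μ}

/-- The Ulam floating body `M_δ(K)`. -/
noncomputable def ulam {n : ℕ} (K : Set (EuclideanSpace ℝ (Fin n))) (δ : ℝ) :
    Set (EuclideanSpace ℝ (Fin n)) :=
  metronoid ((volume.restrict K).withDensity fun _ => ENNReal.ofReal (1 / δ))

/-! For `δ = 1/2` the rescaled measure `2 • vol|_K` has total mass `2`, so a weight `f` with
`0 ≤ f ≤ 1` and `∫ f = 1` has a complementary weight `1 - f` of the same kind. Their moments add up
to the barycenter of the measure, which is `0`; hence the metronoid is symmetric. -/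

namespace Metronoid

variable {n : ℕ} {μ : Measure (EuclideanSpace ℝ (Fin n))}

theorem barycenter_sub_mem (hμ : μ.real univ = 2) (hid : Integrable id μ)
    {z : EuclideanSpace ℝ (Fin n)} (hz : z ∈ metronoid μ) : (∫ y, y ∂μ) - z ∈ metronoid μ := by
  have : IsFiniteMeasure μ := ⟨lt_top_iff_ne_top.2 fun h => by simp [measureReal_def, h] at hμ⟩
  obtain ⟨f, hf01, hf, hf_mass, hf_moment, rfl⟩ := hz
  have hcompl : (fun y : EuclideanSpace ℝ (Fin n) => (1 - f y) • y) = fun y => y - f y • y := by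
    funext y
    rw [sub_smul, one_smul]
  refine ⟨fun y => 1 - f y, fun y => ⟨sub_nonneg.2 (hf01 y).2, sub_le_self 1 (hf01 y).1⟩,
    (integrable_const 1).sub hf, ?_, ?_, ?_⟩
  · rw [integral_sub (integrable_const 1) hf, hf_mass, integral_const, hμ]
    norm_num
  · rw [hcompl]
    exact hid.sub hf_moment
  · rw [hcompl]
    exact (integral_sub hid hf_moment).symm

theorem neg_eq_self (hμ : μ.real univ = 2) (hid : Integrable id μ)
    (hbar : ∫ y, y ∂μ = 0) : -metronoid μ = metronoid μ := by
  have hneg : ∀ z ∈ metronoid μ, -z ∈ metronoid μ := fun z hz => by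
    simpa [hbar] using barycenter_sub_mem hμ hid hz
  exact Subset.antisymm (fun z hz => neg_neg z ▸ hneg _ hz) hneg

end Metronoid

theorem stmt2_general (n : ℕ) (K : Set (EuclideanSpace ℝ (Fin n)))
    (hK : IsCompact K)
    (hvol : volume K = 1) (hbar : (∫ x in K, x) = 0) :
    ulam K (1 / 2) = -ulam K (1 / 2) := by
  have hulam : ulam K (1 / 2) = metronoid ((2 : ℝ≥0∞) • volume.restrict K) := by
    rw [ulam, withDensity_const]
    norm_num
  have hmass : ((2 : ℝ≥0∞) • volume.restrict K).real univ = 2 := by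
    simp [measureReal_def, hvol]
  have hid : Integrable id ((2 : ℝ≥0∞) • volume.restrict K) :=
    (continuous_id.continuousOn.integrableOn_compact hK).smul_measure (by norm_num)
  have hbar2 : ∫ y, y ∂((2 : ℝ≥0∞) • volume.restrict K) = 0 := by
    simp [integral_smul_measure, hbar]
  rw [hulam, Metronoid.neg_eq_self hmass hid hbar2]

/-- If `K` is a convex body with barycenter `0` and volume `1`, then `M_{1/2}(K)`
is centrally symmetric. -/
theorem stmt2 (n : ℕ) (K : Set (EuclideanSpace ℝ (Fin n)))
    (hK : IsCompact K) (hKc : Convex ℝ K) (hKi : (interior K).Nonempty)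
    (hvol : volume K = 1) (hbar : (∫ x in K, x) = 0) :
    ulam K (1 / 2) = -ulam K (1 / 2) :=
  stmt2_general n K hK hvol hbar
end

section
/- Let h(ρ,δ) denote the height of a cap of the Euclidean ball ρB₂ⁿ ⊆ ℝ^n of volume δ. Then lim_{δ→0⁺} h(ρ,δ)/δ^{2/(n+1)} = (1/2)·((n+1)/|B₂^{n-1}|)^{2/(n+1)}·ρ^{-(n-1)/(n+1)}. -/
open MeasureTheory Metric Set Filter
open scoped Topology

/-!
Write `β = α + 1` with `α = (n - 1)/2` and `κ = |B₂^{n-1}|`. On `[0, x]` the integrand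
`(t (2ρ - t))^α` lies between `((2ρ - x) t)^α` and `(2ρ t)^α`, so the cap integral `F(x)` satisfies
`F(x) / x^β → (2ρ)^α / β` as `x → 0⁺`. Since `F` is increasing and positive, a cap of small volume
`δ = κ F(h)` has small height `h`, hence `δ / h^β → κ (2ρ)^α / β`; raising to the power `-1/β`
gives the limit of `h / δ^{1/β}`, and `1/β = 2/(n+1)`.
-/

/-- With `α = (n - 1)/2`, `|B₂^{n-1}| * capIntegral ρ α x` is the volume of the cap of height `x`
of `ρB₂ⁿ`. -/
noncomputable def capIntegral (ρ α x : ℝ) : ℝ :=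
  ∫ t in (0 : ℝ)..x, (ρ ^ 2 - (ρ - t) ^ 2) ^ α

lemma integral_const_mul_rpow (c : ℝ) {α : ℝ} (hα : -1 < α) (x : ℝ) :
    ∫ t in (0 : ℝ)..x, c * t ^ α = c * (x ^ (α + 1) / (α + 1)) := by
  rw [intervalIntegral.integral_const_mul, integral_rpow (Or.inl (by linarith)),
    Real.zero_rpow (by linarith), sub_zero]

namespace capIntegral

variable {ρ α x : ℝ}

lemma continuous_integrand (hα : 0 ≤ α) :
    Continuous fun t : ℝ => (ρ ^ 2 - (ρ - t) ^ 2) ^ α := by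
  fun_prop (disch := exact Or.inr hα)

lemma integrand_nonneg {t : ℝ} (ht : t ∈ Icc 0 (2 * ρ)) : 0 ≤ (ρ ^ 2 - (ρ - t) ^ 2) ^ α :=
  Real.rpow_nonneg (by nlinarith [ht.1, ht.2]) α

lemma le_rpow_mul (hα : 0 ≤ α) (hx : 0 ≤ x) (hx2 : x ≤ 2 * ρ) :
    (2 * ρ - x) ^ α * (x ^ (α + 1) / (α + 1)) ≤ capIntegral ρ α x := by
  have hpow : Continuous fun t : ℝ => (2 * ρ - x) ^ α * t ^ α := by
    fun_prop (disch := exact Or.inr hα)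
  rw [← integral_const_mul_rpow _ (by linarith)]
  refine intervalIntegral.integral_mono_on hx (hpow.intervalIntegrable _ _)
    ((continuous_integrand hα).intervalIntegrable _ _) fun t ht => ?_
  rw [← Real.mul_rpow (by linarith) ht.1]
  exact Real.rpow_le_rpow (by nlinarith [ht.1, ht.2]) (by nlinarith [ht.1, ht.2]) hα

lemma le_mul_rpow (hα : 0 ≤ α) (hx : 0 ≤ x) (hx2 : x ≤ 2 * ρ) :
    capIntegral ρ α x ≤ (2 * ρ) ^ α * (x ^ (α + 1) / (α + 1)) := by
  have hpow : Continuous fun t : ℝ => (2 * ρ) ^ α * t ^ α := by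
    fun_prop (disch := exact Or.inr hα)
  rw [← integral_const_mul_rpow _ (by linarith)]
  refine intervalIntegral.integral_mono_on hx ((continuous_integrand hα).intervalIntegrable _ _)
    (hpow.intervalIntegrable _ _) fun t ht => ?_
  rw [← Real.mul_rpow (by linarith) ht.1]
  exact Real.rpow_le_rpow (by nlinarith [ht.1, ht.2]) (by nlinarith [ht.1, ht.2]) hα

lemma mono (hα : 0 ≤ α) {y : ℝ} (hx : 0 ≤ x) (hxy : x ≤ y) (hy : y ≤ 2 * ρ) :
    capIntegral ρ α x ≤ capIntegral ρ α y := by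
  have hint := (continuous_integrand (ρ := ρ) hα).intervalIntegrable (μ := volume)
  rw [← sub_nonneg, capIntegral, capIntegral,
    intervalIntegral.integral_interval_sub_left (hint _ _) (hint _ _)]
  exact intervalIntegral.integral_nonneg hxy fun t ht =>
    integrand_nonneg ⟨hx.trans ht.1, ht.2.trans hy⟩

lemma tendsto_div_rpow (hα : 0 ≤ α) (hρ : 0 < ρ) :
    Tendsto (fun x => capIntegral ρ α x / x ^ (α + 1)) (𝓝[>] 0)
      (𝓝 ((2 * ρ) ^ α / (α + 1))) := by
  have hlower : Tendsto (fun x => (2 * ρ - x) ^ α / (α + 1)) (𝓝[>] 0)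
      (𝓝 ((2 * ρ) ^ α / (α + 1))) := by
    have : ContinuousAt (fun x => (2 * ρ - x) ^ α / (α + 1)) 0 := by
      fun_prop (disch := exact Or.inr hα)
    simpa using this.tendsto.mono_left nhdsWithin_le_nhds
  refine tendsto_of_tendsto_of_tendsto_of_le_of_le' hlower tendsto_const_nhds ?_ ?_ <;>
    filter_upwards [Ioo_mem_nhdsGT (by positivity : (0 : ℝ) < 2 * ρ)] with x hx <;>
    have hxβ : 0 < x ^ (α + 1) := Real.rpow_pos_of_pos hx.1 _
  · rw [le_div_iff₀ hxβ, div_mul_eq_mul_div, mul_div_assoc]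
    exact le_rpow_mul hα hx.1.le hx.2.le
  · rw [div_le_iff₀ hxβ, div_mul_eq_mul_div, mul_div_assoc]
    exact le_mul_rpow hα hx.1.le hx.2.le

lemma pos (hα : 0 ≤ α) (hx : 0 < x) (hx2 : x < 2 * ρ) : 0 < capIntegral ρ α x := by
  refine lt_of_lt_of_le ?_ (le_rpow_mul hα hx.le hx2.le)
  have := Real.rpow_pos_of_pos (sub_pos.2 hx2) α
  have := Real.rpow_pos_of_pos hx (α + 1)
  positivity

end capIntegral

section CapHeight

variable {ρ α κ δ₀ : ℝ} {h : ℝ → ℝ}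

lemma tendsto_capHeight_nhdsGT_zero (hα : 0 ≤ α) (hρ : 0 < ρ) (hκ : 0 < κ) (hδ₀ : 0 < δ₀)
    (hcap : ∀ δ ∈ Ioo 0 δ₀, 0 < h δ ∧ h δ ≤ 2 * ρ ∧ κ * capIntegral ρ α (h δ) = δ) :
    Tendsto h (𝓝[>] 0) (𝓝[>] 0) := by
  have hpos : ∀ᶠ δ in 𝓝[>] 0, 0 < h δ := by
    filter_upwards [Ioo_mem_nhdsGT hδ₀] with δ hδ using (hcap δ hδ).1
  refine tendsto_nhdsWithin_iff.2 ⟨tendsto_order.2 ⟨fun a ha => ?_, fun ε hε => ?_⟩, hpos⟩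
  · filter_upwards [hpos] with δ hδ using ha.trans hδ
  -- a cap of height at least `ε' ≤ ε` has volume at least `κ * capIntegral ρ α ε' > 0`
  set ε' := min ε ρ
  have hε' : 0 < ε' := lt_min hε hρ
  have hF : 0 < κ * capIntegral ρ α ε' :=
    mul_pos hκ (capIntegral.pos hα hε' ((min_le_right _ _).trans_lt (by linarith)))
  filter_upwards [Ioo_mem_nhdsGT (lt_min hδ₀ hF)] with δ hδ
  obtain ⟨h0, h2ρ, hvol⟩ := hcap δ ⟨hδ.1, hδ.2.trans_le (min_le_left _ _)⟩
  by_contra! hle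
  have := capIntegral.mono hα hε'.le ((min_le_left _ _).trans hle) h2ρ
  have := hδ.2.trans_le (min_le_right _ _)
  nlinarith

theorem tendsto_capHeight_div_rpow (hα : 0 ≤ α) (hρ : 0 < ρ) (hκ : 0 < κ) (hδ₀ : 0 < δ₀)
    (hcap : ∀ δ ∈ Ioo 0 δ₀, 0 < h δ ∧ h δ ≤ 2 * ρ ∧ κ * capIntegral ρ α (h δ) = δ) :
    Tendsto (fun δ => h δ / δ ^ (α + 1)⁻¹) (𝓝[>] 0)
      (𝓝 ((κ * ((2 * ρ) ^ α / (α + 1))) ^ (-(α + 1)⁻¹))) := by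
  have hβ : α + 1 ≠ 0 := by linarith
  have hlim : Tendsto (fun δ => κ * (capIntegral ρ α (h δ) / h δ ^ (α + 1))) (𝓝[>] 0)
      (𝓝 (κ * ((2 * ρ) ^ α / (α + 1)))) :=
    ((capIntegral.tendsto_div_rpow hα hρ).comp
      (tendsto_capHeight_nhdsGT_zero hα hρ hκ hδ₀ hcap)).const_mul κ
  refine (hlim.rpow_const (Or.inl (by positivity))).congr' ?_
  filter_upwards [Ioo_mem_nhdsGT hδ₀] with δ hδ
  obtain ⟨h0, -, hvol⟩ := hcap δ hδ
  rw [← mul_div_assoc, hvol, Real.rpow_neg (div_nonneg hδ.1.le (by positivity)),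
    Real.div_rpow hδ.1.le (by positivity), Real.rpow_rpow_inv h0.le hβ, inv_div]

end CapHeight

lemma capHeight_const_eq {n κ ρ : ℝ} (hn : 0 < n + 1) (hκ : 0 < κ) (hρ : 0 < ρ) :
    (κ * ((2 * ρ) ^ ((n - 1) / 2) / ((n - 1) / 2 + 1))) ^ (-((n - 1) / 2 + 1)⁻¹) =
      1 / 2 * ((n + 1) / κ) ^ (2 / (n + 1)) * ρ ^ (-((n - 1) / (n + 1))) := by
  have hβ : (n - 1) / 2 + 1 = (n + 1) / 2 := by ring
  have h2 : (2 : ℝ) ^ ((n + 1) / 2) = 2 ^ ((n - 1) / 2) * 2 := by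
    rw [← Real.rpow_add_one two_ne_zero]; ring_nf
  have hbase : κ * ((2 * ρ) ^ ((n - 1) / 2) / ((n - 1) / 2 + 1)) =
      ((n + 1) / κ) ^ (-1 : ℝ) * 2 ^ ((n + 1) / 2) * ρ ^ ((n - 1) / 2) := by
    rw [Real.mul_rpow zero_le_two hρ.le, Real.rpow_neg_one, h2, hβ]
    field_simp
  rw [hbase, hβ, inv_div, Real.mul_rpow (by positivity) (by positivity),
    Real.mul_rpow (by positivity) (by positivity), ← Real.rpow_mul (by positivity),
    ← Real.rpow_mul zero_le_two, ← Real.rpow_mul hρ.le, neg_one_mul, neg_neg,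
    show (n + 1) / 2 * -(2 / (n + 1)) = -1 by field_simp,
    show (n - 1) / 2 * -(2 / (n + 1)) = -((n - 1) / (n + 1)) by field_simp, Real.rpow_neg_one]
  ring

/-- If `h δ` is the height of a cap of volume `δ` of the ball `ρB₂ⁿ ⊆ ℝⁿ`
(for all small `δ > 0`), then
`h(ρ,δ)/δ^{2/(n+1)} → (1/2)((n+1)/|B₂^{n-1}|)^{2/(n+1)} ρ^{-(n-1)/(n+1)}` as `δ → 0⁺`. -/
theorem stmt15 (n : ℕ) (hn : 1 ≤ n) (ρ : ℝ) (hρ : 0 < ρ)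
    (h : ℝ → ℝ) (δ₀ : ℝ) (hδ₀ : 0 < δ₀)
    (hcap : ∀ δ ∈ Set.Ioo (0 : ℝ) δ₀, 0 < h δ ∧ h δ ≤ 2 * ρ ∧
      (volume (Metric.ball (0 : EuclideanSpace ℝ (Fin (n - 1))) 1)).toReal *
        (∫ t in (0 : ℝ)..(h δ), (ρ ^ 2 - (ρ - t) ^ 2) ^ (((n : ℝ) - 1) / 2)) = δ) :
    Filter.Tendsto (fun δ : ℝ => h δ / δ ^ ((2 : ℝ) / (n + 1))) (𝓝[>] 0)
      (𝓝 ((1 / 2) *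
        ((n + 1) / (volume (Metric.ball (0 : EuclideanSpace ℝ (Fin (n - 1))) 1)).toReal)
          ^ ((2 : ℝ) / (n + 1)) * ρ ^ (-(((n : ℝ) - 1) / (n + 1))))) := by
  have hκ : 0 < (volume (Metric.ball (0 : EuclideanSpace ℝ (Fin (n - 1))) 1)).toReal :=
    ENNReal.toReal_pos (measure_ball_pos _ _ one_pos).ne' measure_ball_lt_top.ne
  have hα : 0 ≤ ((n : ℝ) - 1) / 2 := by
    have : (1 : ℝ) ≤ n := by exact_mod_cast hn
    linarith
  have hexp : ((n : ℝ) - 1) / 2 + 1 = ((2 : ℝ) / (n + 1))⁻¹ := by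
    rw [inv_div]; ring
  have := tendsto_capHeight_div_rpow hα hρ hκ hδ₀ hcap
  rwa [capHeight_const_eq (by positivity) hκ hρ, hexp, inv_inv] at this
end
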